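/- Suppose Σ_{n≥1} |ρ(n)| < ∞. For q ≥ 1 let ρ^{(q)}(n) = ρ(n) for n ≤ q and ρ^{(q)}(n) = 0 for n > q, and let Z^{(q)}_n, F^{a,q} and h_c^{a,q} denote the annealed partition function, free energy and critical point associated with ρ^{(q)}. Set ε_q = β² Σ_{k ≥ q+1} |ρ(k)|. Then for every β ≥ 0, h ∈ ℝ and n ≥ 1: Z^{(q)}_n(β, h − ε_q) ≤ Z_n(β,h) ≤ Z^{(q)}_n(β, h + ε_q). Consequently F^{a,q}(β, h − ε_q) ≤ F^a(β,h) ≤ F^{a,q}(β, h + ε_q) for all h, and h_c^{a,q}(β) − ε_q ≤ h_c^a(β) ≤ h_c^{a,q}(β) + ε_q. -/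

import Mathlib

open Real Filter Finset

noncomputable def annWeight (K ρ : ℕ → ℝ) (β h : ℝ) {m : ℕ} (c : Composition m) : ℝ :=
  Real.exp ((c.length : ℝ) * (h + β ^ 2 / 2)
      + β ^ 2 * ∑ i : Fin c.length, ∑ j : Fin c.length,
          if (i : ℕ) < (j : ℕ) then
            ρ (c.sizeUpTo ((j : ℕ) + 1) - c.sizeUpTo ((i : ℕ) + 1)) else 0)
    * ∏ i : Fin c.length, K (c.blocksFun i)

/-- The annealed partition function `Z_n(β,h)`: the sum over `k ≥ 1` and tuples
`(l_1,…,l_k)` of positive integers with `l_1+⋯+l_k = n` (i.e. compositions of `n`) of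
`exp(k(h+β²/2) + β² Σ_{1≤i<j≤k} ρ(τ_j − τ_i)) ∏ K(l_i)`, where `τ_i = l_1+⋯+l_i`. -/
noncomputable def Zann (K ρ : ℕ → ℝ) (β h : ℝ) (n : ℕ) : ℝ :=
  ∑ c : Composition n, annWeight K ρ β h c

/-!
For a fixed renewal point `τ_i` the gaps `τ_j - τ_i`, `j > i`, are distinct, so
the pairs whose gap exceeds `q` change the correlation sum of a `k`-block composition by at
most `k Σ_{m>q} |ρ(m)|`. Multiplied by `β²` this is exactly what a shift of `h` by `ε_q`
absorbs in the factor `exp(k h)`, which gives the bounds on `Z_n`; taking `(1/n) log` and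
limits gives those on the free energies. Since `Z_n(h + t) ≤ e^{n t} Z_n(h)` for `t ≥ 0`, both
free energies are 1-Lipschitz, so by the intermediate value theorem every zero of one lies
within `ε_q` of a zero of the other; this bounds the suprema of the zero sets, also in the
cases where `sSup` takes its junk value `0` (empty or unbounded zero sets).
-/

open Topology

noncomputable def corrSum (ρ : ℕ → ℝ) {m : ℕ} (c : Composition m) : ℝ :=
  ∑ i : Fin c.length, ∑ j : Fin c.length,
    if (i : ℕ) < (j : ℕ) then
      ρ (c.sizeUpTo ((j : ℕ) + 1) - c.sizeUpTo ((i : ℕ) + 1)) else 0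

theorem sum_comp_le_tsum_of_injOn {ι : Type*} {f : ℕ → ℝ} (hf : Summable f)
    (hf0 : ∀ n, 0 ≤ f n) (s : Finset ι) {D : ι → ℕ} (hD : Set.InjOn D s) :
    ∑ j ∈ s, f (D j) ≤ ∑' n, f n := by
  rw [← Finset.sum_image hD]
  exact hf.sum_le_tsum _ fun n _ => hf0 n

namespace Composition

variable {m : ℕ} (c : Composition m)

theorem sizeUpTo_strictMonoOn : StrictMonoOn c.sizeUpTo (Set.Iic c.length) :=
  fun i hi j hj hij =>
    c.boundary.strictMono (show (⟨i, Nat.lt_succ_of_le hi⟩ : Fin (c.length + 1)) <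
      ⟨j, Nat.lt_succ_of_le hj⟩ from hij)

theorem injOn_sizeUpTo_succ_sub (i : Fin c.length) :
    Set.InjOn (fun j : Fin c.length => c.sizeUpTo ((j : ℕ) + 1) - c.sizeUpTo ((i : ℕ) + 1))
      {j | (i : ℕ) < j} := by
  intro j₁ hj₁ j₂ hj₂ h
  have h₁ := c.monotone_sizeUpTo (Nat.add_le_add_right (le_of_lt hj₁) 1)
  have h₂ := c.monotone_sizeUpTo (Nat.add_le_add_right (le_of_lt hj₂) 1)
  have hsize : c.sizeUpTo ((j₁ : ℕ) + 1) = c.sizeUpTo ((j₂ : ℕ) + 1) := by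
    simp only at h; omega
  have := c.sizeUpTo_strictMonoOn.injOn (Set.mem_Iic.2 j₁.isLt) (Set.mem_Iic.2 j₂.isLt) hsize
  exact Fin.ext (by omega)

end Composition

theorem corrSum_sub_corrSum (ρ σ : ℕ → ℝ) {m : ℕ} (c : Composition m) :
    corrSum ρ c - corrSum σ c = corrSum (fun n => ρ n - σ n) c := by
  simp only [corrSum, ← Finset.sum_sub_distrib]
  refine Finset.sum_congr rfl fun i _ => Finset.sum_congr rfl fun j _ => ?_
  split_ifs <;> simp

theorem abs_corrSum_le {τ : ℕ → ℝ} (hτ : Summable fun n => |τ n|) {m : ℕ}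
    (c : Composition m) : |corrSum τ c| ≤ c.length * ∑' n, |τ n| := by
  calc |corrSum τ c|
      ≤ ∑ i : Fin c.length, ∑ j : Fin c.length, |if (i : ℕ) < (j : ℕ) then
          τ (c.sizeUpTo ((j : ℕ) + 1) - c.sizeUpTo ((i : ℕ) + 1)) else 0| :=
        (Finset.abs_sum_le_sum_abs _ _).trans
          (Finset.sum_le_sum fun i _ => Finset.abs_sum_le_sum_abs _ _)
    _ ≤ ∑ _i : Fin c.length, ∑' n, |τ n| := Finset.sum_le_sum fun i _ => ?_
    _ = c.length * ∑' n, |τ n| := by simp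
  simp only [apply_ite abs, abs_zero]
  rw [← Finset.sum_filter]
  exact sum_comp_le_tsum_of_injOn hτ (fun _ => abs_nonneg _) _
    ((c.injOn_sizeUpTo_succ_sub i).mono fun j hj => by simpa using hj)

theorem hasSum_abs_sub_truncation {ρ : ℕ → ℝ} (hρ : Summable fun n : ℕ => |ρ (n + 1)|)
    (q : ℕ) : HasSum (fun n => |ρ n - if n ≤ q then ρ n else 0|) (∑' k : ℕ, |ρ (q + 1 + k)|) := by
  have htail : Summable fun k : ℕ => |ρ (q + 1 + k)| :=
    ((summable_nat_add_iff q).2 hρ).congr fun k => by rw [show q + 1 + k = k + q + 1 by omega]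
  have hhead : ∑ n ∈ Finset.range (q + 1), |ρ n - if n ≤ q then ρ n else 0| = 0 :=
    Finset.sum_eq_zero fun n hn => by
      rw [if_pos (Nat.lt_succ_iff.1 (Finset.mem_range.1 hn)), sub_self, abs_zero]
  rw [← hasSum_nat_add_iff' (q + 1), hhead, sub_zero]
  have hshift : (fun n => |ρ (n + (q + 1)) - if n + (q + 1) ≤ q then ρ (n + (q + 1)) else 0|)
      = fun k => |ρ (q + 1 + k)| := by
    funext n
    rw [if_neg (by omega), sub_zero, add_comm]
  rw [hshift]
  exact htail.hasSum

theorem abs_corrSum_sub_truncation_le {ρ : ℕ → ℝ} (hρ : Summable fun n : ℕ => |ρ (n + 1)|)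
    (q : ℕ) {m : ℕ} (c : Composition m) :
    |corrSum ρ c - corrSum (fun k => if k ≤ q then ρ k else 0) c|
      ≤ c.length * ∑' k : ℕ, |ρ (q + 1 + k)| := by
  have htrunc := hasSum_abs_sub_truncation hρ q
  rw [corrSum_sub_corrSum, ← htrunc.tsum_eq]
  exact abs_corrSum_le htrunc.summable c

section PartitionFunction

variable {K : ℕ → ℝ} (ρ : ℕ → ℝ) (β : ℝ)

theorem annWeight_eq (h : ℝ) {m : ℕ} (c : Composition m) :
    annWeight K ρ β h c
      = exp (c.length * (h + β ^ 2 / 2) + β ^ 2 * corrSum ρ c)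
        * ∏ i : Fin c.length, K (c.blocksFun i) := rfl

theorem annWeight_nonneg (hK : ∀ n, 1 ≤ n → 0 ≤ K n) (h : ℝ) {m : ℕ} (c : Composition m) :
    0 ≤ annWeight K ρ β h c :=
  mul_nonneg (exp_pos _).le (Finset.prod_nonneg fun i _ => hK _ (c.one_le_blocksFun i))

theorem annWeight_pos (hK : ∀ n, 1 ≤ n → 0 < K n) (h : ℝ) {m : ℕ} (c : Composition m) :
    0 < annWeight K ρ β h c :=
  mul_pos (exp_pos _) (Finset.prod_pos fun i _ => hK _ (c.one_le_blocksFun i))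

theorem annWeight_add (h t : ℝ) {m : ℕ} (c : Composition m) :
    annWeight K ρ β (h + t) c = exp (c.length * t) * annWeight K ρ β h c := by
  rw [annWeight_eq, annWeight_eq, ← mul_assoc, ← exp_add]
  ring_nf

theorem Zann_pos (hK : ∀ n, 1 ≤ n → 0 < K n) (h : ℝ) (n : ℕ) : 0 < Zann K ρ β h n :=
  Finset.sum_pos (fun c _ => annWeight_pos ρ β hK h c) ⟨Composition.ones n, Finset.mem_univ _⟩

theorem Zann_le_Zann_add (hK : ∀ n, 1 ≤ n → 0 ≤ K n) (h : ℝ) {t : ℝ} (ht : 0 ≤ t) (n : ℕ) :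
    Zann K ρ β h n ≤ Zann K ρ β (h + t) n :=
  Finset.sum_le_sum fun c _ => (annWeight_add ρ β h t c).symm ▸
    le_mul_of_one_le_left (annWeight_nonneg ρ β hK h c) (one_le_exp (by positivity))

theorem Zann_add_le (hK : ∀ n, 1 ≤ n → 0 ≤ K n) (h : ℝ) {t : ℝ} (ht : 0 ≤ t) (n : ℕ) :
    Zann K ρ β (h + t) n ≤ exp (n * t) * Zann K ρ β h n := by
  rw [Zann, Zann, Finset.mul_sum]
  refine Finset.sum_le_sum fun c _ => ?_
  rw [annWeight_add]
  gcongr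
  · exact annWeight_nonneg ρ β hK h c
  · exact c.length_le

theorem Zann_le_Zann_of_corrSum_le (σ : ℕ → ℝ) (hK : ∀ n, 1 ≤ n → 0 ≤ K n) {n : ℕ} {δ : ℝ}
    (hσρ : ∀ c : Composition n, corrSum σ c ≤ corrSum ρ c + c.length * δ) (h : ℝ) :
    Zann K σ β h n ≤ Zann K ρ β (h + β ^ 2 * δ) n := by
  refine Finset.sum_le_sum fun c _ => ?_
  rw [annWeight_eq, annWeight_eq]
  refine mul_le_mul_of_nonneg_right (exp_le_exp.2 ?_)
    (Finset.prod_nonneg fun i _ => hK _ (c.one_le_blocksFun i))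
  nlinarith [mul_le_mul_of_nonneg_left (hσρ c) (sq_nonneg β)]

end PartitionFunction

theorem le_of_tendsto_log_div {Z W : ℕ → ℝ} {A B : ℝ} (hZ : ∀ n, 0 < Z n)
    (hZW : ∀ n, Z n ≤ W n)
    (hA : Tendsto (fun n : ℕ => (1 / (n : ℝ)) * log (Z n)) atTop (𝓝 A))
    (hB : Tendsto (fun n : ℕ => (1 / (n : ℝ)) * log (W n)) atTop (𝓝 B)) : A ≤ B :=
  le_of_tendsto_of_tendsto' hA hB fun n =>
    mul_le_mul_of_nonneg_left (log_le_log (hZ n) (hZW n)) (by positivity)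

theorem lipschitzWith_one_of_tendsto_log_Zann {K : ℕ → ℝ} (hK : ∀ n, 1 ≤ n → 0 < K n)
    (ρ : ℕ → ℝ) (β : ℝ) {F : ℝ → ℝ}
    (hF : ∀ h, Tendsto (fun n : ℕ => (1 / (n : ℝ)) * log (Zann K ρ β h n)) atTop (𝓝 (F h))) :
    LipschitzWith 1 F := by
  have hK' : ∀ n, 1 ≤ n → 0 ≤ K n := fun n hn => (hK n hn).le
  have hmono : ∀ h t, 0 ≤ t → F h ≤ F (h + t) := fun h t ht =>
    le_of_tendsto_log_div (Zann_pos ρ β hK h) (Zann_le_Zann_add ρ β hK' h ht) (hF h) (hF (h + t))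
  have hlip : ∀ h t, 0 ≤ t → F (h + t) ≤ t + F h := by
    intro h t ht
    refine le_of_tendsto_log_div (Zann_pos ρ β hK (h + t)) (Zann_add_le ρ β hK' h ht)
      (hF (h + t)) (((hF h).const_add t).congr' (eventually_atTop.2 ⟨1, fun n hn => ?_⟩))
    have hn : (n : ℝ) ≠ 0 := by positivity
    dsimp only
    rw [log_mul (exp_ne_zero _) (Zann_pos ρ β hK h n).ne', log_exp]
    field_simp
  refine LipschitzWith.of_le_add fun x y => ?_
  rw [Real.dist_eq]
  rcases le_total x y with hxy | hxy
  · have := hmono x (y - x) (sub_nonneg.2 hxy)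
    rw [add_sub_cancel] at this
    linarith [abs_nonneg (x - y)]
  · have := hlip y (x - y) (sub_nonneg.2 hxy)
    rw [add_sub_cancel, ← abs_of_nonneg (sub_nonneg.2 hxy)] at this
    linarith

theorem sSup_le_sSup_add_of_forall_exists_le {A B : Set ℝ} {ε : ℝ} (hε : 0 ≤ ε)
    (hAB : ∀ a ∈ A, ∃ b ∈ B, a ≤ b + ε) (hBA : ∀ b ∈ B, ∃ a ∈ A, b ≤ a + ε) :
    sSup A ≤ sSup B + ε := by
  rcases A.eq_empty_or_nonempty with rfl | hA
  · have hB : B = ∅ := Set.eq_empty_of_forall_notMem fun b hb => by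
      obtain ⟨a, ha, -⟩ := hBA b hb
      exact ha
    simp [hB, hε]
  by_cases hB : BddAbove B
  · refine csSup_le hA fun a ha => ?_
    obtain ⟨b, hb, hab⟩ := hAB a ha
    linarith [le_csSup hB hb]
  · have hA' : ¬BddAbove A := fun ⟨M, hM⟩ => hB ⟨M + ε, fun b hb => by
      obtain ⟨a, ha, hba⟩ := hBA b hb
      linarith [hM ha]⟩
    rw [Real.sSup_of_not_bddAbove hA', Real.sSup_of_not_bddAbove hB, zero_add]
    exact hε

theorem exists_zero_of_le_of_le {f g : ℝ → ℝ} (hg : Continuous g) {ε : ℝ} (hε : 0 ≤ ε)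
    (hfg : ∀ h, g (h - ε) ≤ f h ∧ f h ≤ g (h + ε)) {a : ℝ} (ha : f a = 0) :
    ∃ b, g b = 0 ∧ a ≤ b + ε := by
  obtain ⟨b, hb, hb0⟩ := intermediate_value_Icc (by linarith : a - ε ≤ a + ε) hg.continuousOn
    ⟨(hfg a).1.trans_eq ha, ha.symm.trans_le (hfg a).2⟩
  exact ⟨b, hb0, by linarith [hb.1]⟩

theorem abs_sSup_zeros_sub_le {f g : ℝ → ℝ} (hf : Continuous f) (hg : Continuous g)
    {ε : ℝ} (hε : 0 ≤ ε) (hfg : ∀ h, g (h - ε) ≤ f h ∧ f h ≤ g (h + ε)) :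
    |sSup {h | f h = 0} - sSup {h | g h = 0}| ≤ ε := by
  have hgf : ∀ h, f (h - ε) ≤ g h ∧ g h ≤ f (h + ε) := fun h =>
    ⟨by simpa using (hfg (h - ε)).2, by simpa using (hfg (h + ε)).1⟩
  have hfg' : ∀ a ∈ {h | f h = 0}, ∃ b ∈ {h | g h = 0}, a ≤ b + ε := fun a ha =>
    exists_zero_of_le_of_le hg hε hfg ha
  have hgf' : ∀ b ∈ {h | g h = 0}, ∃ a ∈ {h | f h = 0}, b ≤ a + ε := fun b hb =>
    exists_zero_of_le_of_le hf hε hgf hb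
  rw [abs_sub_le_iff]
  constructor
  · linarith [sSup_le_sSup_add_of_forall_exists_le hε hfg' hgf']
  · linarith [sSup_le_sSup_add_of_forall_exists_le hε hgf' hfg']

theorem truncation_comparison_general (K ρ : ℕ → ℝ)
    (hKpos : ∀ n : ℕ, 1 ≤ n → 0 < K n)
    (hρ : Summable fun n : ℕ => |ρ (n + 1)|)
    (β : ℝ)
    (Fa : ℝ → ℝ)
    (hFa : ∀ h : ℝ, Tendsto (fun n : ℕ => (1 / (n : ℝ)) * Real.log (Zann K ρ β h n))
      atTop (nhds (Fa h)))
    (Faq : ℕ → ℝ → ℝ)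
    (hFaq : ∀ q : ℕ, 1 ≤ q → ∀ h : ℝ,
      Tendsto (fun n : ℕ =>
          (1 / (n : ℝ)) * Real.log (Zann K (fun k => if k ≤ q then ρ k else 0) β h n))
        atTop (nhds (Faq q h))) :
    ∀ q : ℕ, 1 ≤ q →
      (∀ h : ℝ, ∀ n : ℕ, 1 ≤ n →
        Zann K (fun k => if k ≤ q then ρ k else 0) β
            (h - β ^ 2 * ∑' k : ℕ, |ρ (q + 1 + k)|) n ≤ Zann K ρ β h n ∧
          Zann K ρ β h n ≤ Zann K (fun k => if k ≤ q then ρ k else 0) β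
            (h + β ^ 2 * ∑' k : ℕ, |ρ (q + 1 + k)|) n) ∧
      (∀ h : ℝ,
        Faq q (h - β ^ 2 * ∑' k : ℕ, |ρ (q + 1 + k)|) ≤ Fa h ∧
          Fa h ≤ Faq q (h + β ^ 2 * ∑' k : ℕ, |ρ (q + 1 + k)|)) ∧
      sSup {h : ℝ | Faq q h = 0} - β ^ 2 * ∑' k : ℕ, |ρ (q + 1 + k)|
          ≤ sSup {h : ℝ | Fa h = 0} ∧
        sSup {h : ℝ | Fa h = 0}
          ≤ sSup {h : ℝ | Faq q h = 0} + β ^ 2 * ∑' k : ℕ, |ρ (q + 1 + k)| := by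
  intro q hq
  set ρq : ℕ → ℝ := fun k => if k ≤ q then ρ k else 0
  set T := ∑' k : ℕ, |ρ (q + 1 + k)|
  have hK : ∀ n, 1 ≤ n → 0 ≤ K n := fun n hn => (hKpos n hn).le
  have hcorr {m : ℕ} (c : Composition m) := abs_le.1 (abs_corrSum_sub_truncation_le hρ q c)
  have hZ : ∀ h n, Zann K ρq β (h - β ^ 2 * T) n ≤ Zann K ρ β h n ∧
      Zann K ρ β h n ≤ Zann K ρq β (h + β ^ 2 * T) n := by
    intro h n
    have hlow := Zann_le_Zann_of_corrSum_le ρ β ρq hK (n := n) (δ := T)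
      (fun c => by linarith [(hcorr c).1]) (h - β ^ 2 * T)
    rw [sub_add_cancel] at hlow
    exact ⟨hlow, Zann_le_Zann_of_corrSum_le ρq β ρ hK (fun c => by linarith [(hcorr c).2]) h⟩
  have hF : ∀ h, Faq q (h - β ^ 2 * T) ≤ Fa h ∧ Fa h ≤ Faq q (h + β ^ 2 * T) := fun h =>
    ⟨le_of_tendsto_log_div (Zann_pos ρq β hKpos _) (hZ h · |>.1) (hFaq q hq _) (hFa h),
      le_of_tendsto_log_div (Zann_pos ρ β hKpos h) (hZ h · |>.2) (hFa h) (hFaq q hq _)⟩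
  have hcrit := abs_sub_le_iff.1 <| abs_sSup_zeros_sub_le
    (lipschitzWith_one_of_tendsto_log_Zann hKpos ρ β hFa).continuous
    (lipschitzWith_one_of_tendsto_log_Zann hKpos ρq β (hFaq q hq)).continuous
    (mul_nonneg (sq_nonneg β) (tsum_nonneg fun _ => abs_nonneg _)) hF
  exact ⟨fun h n _ => hZ h n, hF, by linarith [hcrit.2], by linarith [hcrit.1]⟩

/-- Comparison with the model with truncated correlations `ρ^{(q)}(n) = ρ(n) 1_{n ≤ q}`:
bounds on partition functions, free energies and critical points, with
`ε_q = β² Σ_{k>q} |ρ(k)|`. -/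
theorem truncation_comparison (K ρ : ℕ → ℝ)
    (hKpos : ∀ n : ℕ, 1 ≤ n → 0 < K n)
    (hKsum : HasSum (fun n : ℕ => K (n + 1)) 1)
    (hρ : Summable fun n : ℕ => |ρ (n + 1)|)
    (β : ℝ) (hβ : 0 ≤ β)
    (Fa : ℝ → ℝ)
    (hFa : ∀ h : ℝ, Tendsto (fun n : ℕ => (1 / (n : ℝ)) * Real.log (Zann K ρ β h n))
      atTop (nhds (Fa h)))
    (Faq : ℕ → ℝ → ℝ)
    (hFaq : ∀ q : ℕ, 1 ≤ q → ∀ h : ℝ,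
      Tendsto (fun n : ℕ =>
          (1 / (n : ℝ)) * Real.log (Zann K (fun k => if k ≤ q then ρ k else 0) β h n))
        atTop (nhds (Faq q h))) :
    ∀ q : ℕ, 1 ≤ q →
      (∀ h : ℝ, ∀ n : ℕ, 1 ≤ n →
        Zann K (fun k => if k ≤ q then ρ k else 0) β
            (h - β ^ 2 * ∑' k : ℕ, |ρ (q + 1 + k)|) n ≤ Zann K ρ β h n ∧
          Zann K ρ β h n ≤ Zann K (fun k => if k ≤ q then ρ k else 0) β
            (h + β ^ 2 * ∑' k : ℕ, |ρ (q + 1 + k)|) n) ∧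
      (∀ h : ℝ,
        Faq q (h - β ^ 2 * ∑' k : ℕ, |ρ (q + 1 + k)|) ≤ Fa h ∧
          Fa h ≤ Faq q (h + β ^ 2 * ∑' k : ℕ, |ρ (q + 1 + k)|)) ∧
      sSup {h : ℝ | Faq q h = 0} - β ^ 2 * ∑' k : ℕ, |ρ (q + 1 + k)|
          ≤ sSup {h : ℝ | Fa h = 0} ∧
        sSup {h : ℝ | Fa h = 0}
          ≤ sSup {h : ℝ | Faq q h = 0} + β ^ 2 * ∑' k : ℕ, |ρ (q + 1 + k)| :=
  truncation_comparison_general K ρ hKpos hρ β Fa hFa Faq hFaq
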